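/- arXiv:2307.16056 — 2 statements merged into one kernel-verified Lean document; each statement's English description precedes it below -/
import Mathlib

section
/- Let 𝒜 = {A₁, A₂, A₃, A₄} be a 4-cover of ℝ such that A₂ is countable. Then the following conditions are equivalent: (1) the hybrid space H₄(𝒜) is second-countable; (2) H₄(𝒜) is metrizable; (3) A₃ ∪ A₄ is countable. -/
open Set

/-- The Sorgenfrey topology on ℝ (generated by the intervals `[a, b)`). -/
def sorgenfreyTop : TopologicalSpace ℝ :=
  TopologicalSpace.generateFrom {S : Set ℝ | ∃ a b : ℝ, S = Set.Ico a b}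

/-- The "left" Sorgenfrey topology on ℝ (generated by the intervals `(a, b]`). -/
def sorgenfreyLeftTop : TopologicalSpace ℝ :=
  TopologicalSpace.generateFrom {S : Set ℝ | ∃ a b : ℝ, S = Set.Ioc a b}

/-- `A₁, A₂, A₃, A₄` form a 4-cover of ℝ: pairwise disjoint with union ℝ. -/
def Is4Cover (A₁ A₂ A₃ A₄ : Set ℝ) : Prop :=
  A₁ ∪ A₂ ∪ A₃ ∪ A₄ = Set.univ ∧
  Disjoint A₁ A₂ ∧ Disjoint A₁ A₃ ∧ Disjoint A₁ A₄ ∧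
  Disjoint A₂ A₃ ∧ Disjoint A₂ A₄ ∧ Disjoint A₃ A₄

/-- The hybrid topology determined by a 4-cover: points of `A₁` have the usual
open intervals as a local base, points of `A₂` are isolated, points of `A₃`
have a local base of sets `[x, x+ε)`, and points of `A₄` of sets `(x-ε, x]`. -/
def hybridTop (A₁ A₂ A₃ A₄ : Set ℝ) : TopologicalSpace ℝ :=
  TopologicalSpace.generateFrom
    ({S : Set ℝ | ∃ x ∈ A₁, ∃ ε : ℝ, 0 < ε ∧ S = Set.Ioo (x - ε) (x + ε)} ∪
     {S : Set ℝ | ∃ x ∈ A₂, S = {x}} ∪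
     {S : Set ℝ | ∃ x ∈ A₃, ∃ ε : ℝ, 0 < ε ∧ S = Set.Ico x (x + ε)} ∪
     {S : Set ℝ | ∃ x ∈ A₄, ∃ ε : ℝ, 0 < ε ∧ S = Set.Ioc (x - ε) x})

/-- A quasi-metric: nonnegative, vanishing exactly on the diagonal,
satisfying the triangle inequality. -/
def IsQuasiMetric {X : Type*} (ρ : X → X → ℝ) : Prop :=
  (∀ x y, 0 ≤ ρ x y) ∧ (∀ x y, ρ x y = 0 ↔ x = y) ∧
  (∀ x y z, ρ x y ≤ ρ x z + ρ z y)

/-- A non-archimedean quasi-metric. -/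
def IsNAQuasiMetric {X : Type*} (ρ : X → X → ℝ) : Prop :=
  IsQuasiMetric ρ ∧ ∀ x y z, ρ x y ≤ max (ρ x z) (ρ z y)

/-- The topology induced by a quasi-metric: the balls `B_ρ(x, r)` form a base. -/
def quasiMetricTop {X : Type*} (ρ : X → X → ℝ) : TopologicalSpace X :=
  TopologicalSpace.generateFrom
    {B : Set X | ∃ x : X, ∃ r : ℝ, 0 < r ∧ B = {y : X | ρ x y < r}}

/-- A topology is quasi-metrizable if it is induced by some quasi-metric. -/
def QuasiMetrizableTop {X : Type*} (t : TopologicalSpace X) : Prop :=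
  ∃ ρ : X → X → ℝ, IsQuasiMetric ρ ∧ t = quasiMetricTop ρ

/-- A topology is non-archimedeanly quasi-metrizable if it is induced by some
non-archimedean quasi-metric. -/
def NAQuasiMetrizableTop {X : Type*} (t : TopologicalSpace X) : Prop :=
  ∃ ρ : X → X → ℝ, IsNAQuasiMetric ρ ∧ t = quasiMetricTop ρ

/-!
The hybrid neighbourhood filter of `x` is `𝓝[K x] x` for the Euclidean topology, where the
Euclidean-closed set `K x` is `{x}`, `[x, ∞)`, `(-∞, x]` or `ℝ` according as `x` lies in `A₂`, `A₃`,
`A₄` or `A₁`. Hence the hybrid topology is finer than the Euclidean one and regular, so second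
countability gives metrizability by Urysohn's theorem; conversely, a metrizable hybrid space is
second countable because `ℚ ∪ A₂` is dense. A countable base has to contain, for each `x ∈ A₃`, a
set with least element `x` (and for `x ∈ A₄` one with greatest element `x`), so `A₃ ∪ A₄` is
countable; when it is, the rational intervals together with the sets `K x ∩ (x - q, x + q)`,
`x ∈ A₂ ∪ A₃ ∪ A₄`, `q ∈ ℚ₊`, form a countable base.
-/

open Set Filter Topology TopologicalSpace Metric

theorem Set.Countable.of_mem_nhds_of_antisymm {X : Type*} [TopologicalSpace X]
    [SecondCountableTopology X] {S : Set X} (U : X → Set X) (hU : ∀ x ∈ S, U x ∈ 𝓝 x)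
    (hanti : ∀ x ∈ S, ∀ y ∈ S, y ∈ U x → x ∈ U y → x = y) : S.Countable := by
  obtain ⟨B, hBc, -, hB⟩ := exists_countable_basis X
  have hsmall : ∀ x ∈ S, ∃ b ∈ B, x ∈ b ∧ b ⊆ U x := fun x hx => hB.mem_nhds_iff.1 (hU x hx)
  choose! b hbB hxb hbU using hsmall
  refine MapsTo.countable_of_injOn hbB (fun x hx y hy hxy => hanti x hx y hy ?_ ?_) hBc
  · exact hbU x hx (hxy ▸ hxb y hy)
  · exact hbU y hy (hxy.symm ▸ hxb x hx)

section NhdsWithin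

variable {X : Type*} {t₀ t : TopologicalSpace X} {K : X → Set X}

theorem le_of_forall_nhds_eq_nhdsWithin (ht : ∀ x, @nhds X t x = @nhdsWithin X t₀ x (K x)) :
    t ≤ t₀ :=
  (le_iff_nhds _ _).2 fun x => (ht x).trans_le (@nhdsWithin_le_nhds X t₀ _ _)

theorem t3Space_of_forall_nhds_eq_nhdsWithin (h₀ : @T3Space X t₀) (hK : ∀ x, IsClosed[t₀] (K x))
    (ht : ∀ x, @nhds X t x = @nhdsWithin X t₀ x (K x)) : @T3Space X t := by
  have hle := le_of_forall_nhds_eq_nhdsWithin ht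
  have : @T2Space X t := t2Space_antitone hle inferInstance
  have hbasis (x : X) : (@nhds X t x).HasBasis (fun s => s ∈ @nhds X t₀ x ∧ IsClosed[t₀] s)
      (· ∩ K x) := by
    rw [ht x]
    exact (@closed_nhds_basis X t₀ h₀.toRegularSpace x).inf_principal (K x)
  have : @RegularSpace X t :=
    @RegularSpace.of_hasBasis X t _ _ _ hbasis fun x s hs =>
      (@IsClosed.inter X _ _ t₀ hs.2 (hK x)).mono hle
  exact @T3Space.mk X t inferInstance this

end NhdsWithin

theorem Real.ball_inter_Ici (x ε : ℝ) : ball x ε ∩ Ici x = Ico x (x + ε) := by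
  ext y
  simp only [Real.ball_eq_Ioo, mem_inter_iff, mem_Ioo, mem_Ici, mem_Ico]
  constructor
  · rintro ⟨⟨-, h⟩, h'⟩; exact ⟨h', h⟩
  · rintro ⟨h', h⟩; exact ⟨⟨by linarith, h⟩, h'⟩

theorem Real.ball_inter_Iic (x ε : ℝ) : ball x ε ∩ Iic x = Ioc (x - ε) x := by
  ext y
  simp only [Real.ball_eq_Ioo, mem_inter_iff, mem_Ioo, mem_Iic, mem_Ioc]
  constructor
  · rintro ⟨⟨h, -⟩, h'⟩; exact ⟨h, h'⟩
  · rintro ⟨h, h'⟩; exact ⟨⟨h, by linarith⟩, h'⟩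

namespace Is4Cover

variable {A₁ A₂ A₃ A₄ : Set ℝ}

theorem mem (hcov : Is4Cover A₁ A₂ A₃ A₄) (x : ℝ) : x ∈ A₁ ∪ A₂ ∪ A₃ ∪ A₄ :=
  hcov.1 ▸ mem_univ x

end Is4Cover

section Hybrid

variable {A₁ A₂ A₃ A₄ : Set ℝ}

open Classical in
noncomputable def hybridSide (A₂ A₃ A₄ : Set ℝ) (x : ℝ) : Set ℝ :=
  if x ∈ A₂ then {x} else if x ∈ A₃ then Ici x else if x ∈ A₄ then Iic x else univ

theorem mem_hybridSide (x : ℝ) : x ∈ hybridSide A₂ A₃ A₄ x := by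
  unfold hybridSide; split_ifs <;> simp

theorem isClosed_hybridSide (x : ℝ) : IsClosed (hybridSide A₂ A₃ A₄ x) := by
  unfold hybridSide; split_ifs
  exacts [isClosed_singleton, isClosed_Ici, isClosed_Iic, isClosed_univ]

theorem hybridSide_of_mem₂ {x : ℝ} (hx : x ∈ A₂) : hybridSide A₂ A₃ A₄ x = {x} := by
  rw [hybridSide, if_pos hx]

theorem hybridSide_of_mem₃ (hcov : Is4Cover A₁ A₂ A₃ A₄) {x : ℝ} (hx : x ∈ A₃) :
    hybridSide A₂ A₃ A₄ x = Ici x := by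
  rw [hybridSide, if_neg (hcov.2.2.2.2.1.notMem_of_mem_right hx), if_pos hx]

theorem hybridSide_of_mem₄ (hcov : Is4Cover A₁ A₂ A₃ A₄) {x : ℝ} (hx : x ∈ A₄) :
    hybridSide A₂ A₃ A₄ x = Iic x := by
  rw [hybridSide, if_neg (hcov.2.2.2.2.2.1.notMem_of_mem_right hx),
    if_neg (hcov.2.2.2.2.2.2.notMem_of_mem_right hx), if_pos hx]

theorem hybridSide_of_mem₁ (hcov : Is4Cover A₁ A₂ A₃ A₄) {x : ℝ} (hx : x ∈ A₁) :
    hybridSide A₂ A₃ A₄ x = univ := by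
  rw [hybridSide, if_neg (hcov.2.1.notMem_of_mem_left hx),
    if_neg (hcov.2.2.1.notMem_of_mem_left hx), if_neg (hcov.2.2.2.1.notMem_of_mem_left hx)]

theorem isOpen_ball_inter_hybridSide (hcov : Is4Cover A₁ A₂ A₃ A₄) (x : ℝ) {ε : ℝ} (hε : 0 < ε) :
    IsOpen[hybridTop A₁ A₂ A₃ A₄] (ball x ε ∩ hybridSide A₂ A₃ A₄ x) := by
  apply isOpen_generateFrom_of_mem
  rcases hcov.mem x with ((hx | hx) | hx) | hx
  · rw [hybridSide_of_mem₁ hcov hx, inter_univ, Real.ball_eq_Ioo]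
    exact Or.inl (Or.inl (Or.inl ⟨x, hx, ε, hε, rfl⟩))
  · rw [hybridSide_of_mem₂ hx, inter_eq_right.2 (singleton_subset_iff.2 (mem_ball_self hε))]
    exact Or.inl (Or.inl (Or.inr ⟨x, hx, rfl⟩))
  · rw [hybridSide_of_mem₃ hcov hx, Real.ball_inter_Ici]
    exact Or.inl (Or.inr ⟨x, hx, ε, hε, rfl⟩)
  · rw [hybridSide_of_mem₄ hcov hx, Real.ball_inter_Iic]
    exact Or.inr ⟨x, hx, ε, hε, rfl⟩

theorem nhds_hybridTop (hcov : Is4Cover A₁ A₂ A₃ A₄) (x : ℝ) :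
    @nhds ℝ (hybridTop A₁ A₂ A₃ A₄) x = 𝓝[hybridSide A₂ A₃ A₄ x] x := by
  apply le_antisymm
  · refine nhdsWithin_basis_ball.ge_iff.2 fun ε hε => ?_
    exact @IsOpen.mem_nhds ℝ (hybridTop A₁ A₂ A₃ A₄) _ _ (isOpen_ball_inter_hybridSide hcov x hε)
      ⟨mem_ball_self hε, mem_hybridSide x⟩
  rw [hybridTop, nhds_generateFrom]
  refine le_iInf₂ fun s ⟨hxs, hs⟩ => le_principal_iff.2 ?_
  rcases hs with ((⟨y, -, ε, -, rfl⟩ | ⟨y, hy, rfl⟩) | ⟨y, hy, ε, -, rfl⟩) | ⟨y, hy, ε, -, rfl⟩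
  · exact mem_nhdsWithin_of_mem_nhds (isOpen_Ioo.mem_nhds hxs)
  · obtain rfl : x = y := hxs
    rw [hybridSide_of_mem₂ hy]
    exact self_mem_nhdsWithin
  · rcases hxs.1.eq_or_lt with rfl | hyx
    · rw [hybridSide_of_mem₃ hcov hy]
      exact Ico_mem_nhdsGE hxs.2
    · exact mem_nhdsWithin_of_mem_nhds (Ico_mem_nhds hyx hxs.2)
  · rcases hxs.2.eq_or_lt with rfl | hxy
    · rw [hybridSide_of_mem₄ hcov hy]
      exact Ioc_mem_nhdsLE hxs.1
    · exact mem_nhdsWithin_of_mem_nhds (Ioc_mem_nhds hxs.1 hxy)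

theorem hasBasis_nhds_hybridTop (hcov : Is4Cover A₁ A₂ A₃ A₄) (x : ℝ) :
    (@nhds ℝ (hybridTop A₁ A₂ A₃ A₄) x).HasBasis (0 < ·) (ball x · ∩ hybridSide A₂ A₃ A₄ x) := by
  rw [nhds_hybridTop hcov x]; exact nhdsWithin_basis_ball

theorem hybridTop_le (hcov : Is4Cover A₁ A₂ A₃ A₄) :
    hybridTop A₁ A₂ A₃ A₄ ≤ (inferInstance : TopologicalSpace ℝ) :=
  le_of_forall_nhds_eq_nhdsWithin (nhds_hybridTop hcov)

theorem t3Space_hybridTop (hcov : Is4Cover A₁ A₂ A₃ A₄) : @T3Space ℝ (hybridTop A₁ A₂ A₃ A₄) :=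
  t3Space_of_forall_nhds_eq_nhdsWithin inferInstance isClosed_hybridSide (nhds_hybridTop hcov)

theorem Ici_subset_hybridSide_or_Iic_subset (hcov : Is4Cover A₁ A₂ A₃ A₄) {x : ℝ} (hx : x ∉ A₂) :
    Ici x ⊆ hybridSide A₂ A₃ A₄ x ∨ Iic x ⊆ hybridSide A₂ A₃ A₄ x := by
  rcases hcov.mem x with ((hx₁ | hx₂) | hx₃) | hx₄
  · exact Or.inl (hybridSide_of_mem₁ hcov hx₁ ▸ subset_univ _)
  · exact absurd hx₂ hx
  · exact Or.inl (hybridSide_of_mem₃ hcov hx₃).ge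
  · exact Or.inr (hybridSide_of_mem₄ hcov hx₄).ge

theorem dense_hybridTop (hcov : Is4Cover A₁ A₂ A₃ A₄) :
    @Dense ℝ (hybridTop A₁ A₂ A₃ A₄) (range ((↑) : ℚ → ℝ) ∪ A₂) := by
  intro x
  rw [@mem_closure_iff_nhds_basis ℝ (hybridTop A₁ A₂ A₃ A₄) _ _ _ _ _
    (hasBasis_nhds_hybridTop hcov x)]
  intro ε hε
  by_cases hx₂ : x ∈ A₂
  · exact ⟨x, Or.inr hx₂, mem_ball_self hε, mem_hybridSide x⟩
  rcases Ici_subset_hybridSide_or_Iic_subset hcov hx₂ with hside | hside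
  · obtain ⟨q, hxq, hqε⟩ := exists_rat_btwn (lt_add_of_pos_right x hε)
    have hq : (q : ℝ) ∈ ball x ε ∩ Ici x := Real.ball_inter_Ici x ε ▸ ⟨hxq.le, hqε⟩
    exact ⟨q, Or.inl ⟨q, rfl⟩, hq.1, hside hq.2⟩
  · obtain ⟨q, hεq, hqx⟩ := exists_rat_btwn (sub_lt_self x hε)
    have hq : (q : ℝ) ∈ ball x ε ∩ Iic x := Real.ball_inter_Iic x ε ▸ ⟨hεq, hqx.le⟩
    exact ⟨q, Or.inl ⟨q, rfl⟩, hq.1, hside hq.2⟩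

theorem countable_union_of_secondCountable_hybridTop (hcov : Is4Cover A₁ A₂ A₃ A₄)
    (hsc : @SecondCountableTopology ℝ (hybridTop A₁ A₂ A₃ A₄)) : (A₃ ∪ A₄).Countable := by
  have h₃ : A₃.Countable := by
    refine @Set.Countable.of_mem_nhds_of_antisymm ℝ (hybridTop A₁ A₂ A₃ A₄) hsc A₃ Ici
      (fun x hx => ?_) (fun _ _ _ _ hxy hyx => le_antisymm hxy hyx)
    rw [nhds_hybridTop hcov, hybridSide_of_mem₃ hcov hx]
    exact self_mem_nhdsWithin
  have h₄ : A₄.Countable := by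
    refine @Set.Countable.of_mem_nhds_of_antisymm ℝ (hybridTop A₁ A₂ A₃ A₄) hsc A₄ Iic
      (fun x hx => ?_) (fun _ _ _ _ hxy hyx => le_antisymm hyx hxy)
    rw [nhds_hybridTop hcov, hybridSide_of_mem₄ hcov hx]
    exact self_mem_nhdsWithin
  exact h₃.union h₄

theorem secondCountable_hybridTop_of_countable (hcov : Is4Cover A₁ A₂ A₃ A₄)
    (h₂ : A₂.Countable) (h₃₄ : (A₃ ∪ A₄).Countable) :
    @SecondCountableTopology ℝ (hybridTop A₁ A₂ A₃ A₄) := by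
  let C := A₂ ∪ (A₃ ∪ A₄)
  let B : Set (Set ℝ) := countableBasis ℝ ∪
    (fun p : ℝ × ℚ => ball p.1 p.2 ∩ hybridSide A₂ A₃ A₄ p.1) '' (C ×ˢ {q | 0 < q})
  have hBc : B.Countable :=
    (countable_countableBasis ℝ).union (((h₂.union h₃₄).prod (to_countable _)).image _)
  refine @IsTopologicalBasis.secondCountableTopology ℝ (hybridTop A₁ A₂ A₃ A₄) B
    (@isTopologicalBasis_of_isOpen_of_nhds ℝ (hybridTop A₁ A₂ A₃ A₄) B ?_ ?_) hBc
  · rintro u (hu | ⟨⟨x, q⟩, ⟨-, hq⟩, rfl⟩)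
    · exact (isOpen_of_mem_countableBasis hu).mono (hybridTop_le hcov)
    · exact isOpen_ball_inter_hybridSide hcov x (Rat.cast_pos.2 hq)
  intro x u hxu hu
  obtain ⟨ε, hε, hεu⟩ := (hasBasis_nhds_hybridTop hcov x).mem_iff.1
    (@IsOpen.mem_nhds ℝ (hybridTop A₁ A₂ A₃ A₄) _ _ hu hxu)
  by_cases hxC : x ∈ C
  · obtain ⟨q, hq, hqε⟩ := exists_rat_btwn hε
    exact ⟨_, Or.inr ⟨(x, q), ⟨hxC, Rat.cast_pos.1 hq⟩, rfl⟩,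
      ⟨mem_ball_self hq, mem_hybridSide x⟩,
      (inter_subset_inter_left _ (ball_subset_ball hqε.le)).trans hεu⟩
  · have hx₁ : x ∈ A₁ := by have := hcov.mem x; simp only [C, mem_union] at hxC this; tauto
    rw [hybridSide_of_mem₁ hcov hx₁, inter_univ] at hεu
    obtain ⟨v, hv, hxv, hvu⟩ := (isBasis_countableBasis ℝ).mem_nhds_iff.1 (ball_mem_nhds x hε)
    exact ⟨v, Or.inl hv, hxv, hvu.trans hεu⟩

theorem exists_metricSpace_of_secondCountable_hybridTop (hcov : Is4Cover A₁ A₂ A₃ A₄)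
    (hsc : @SecondCountableTopology ℝ (hybridTop A₁ A₂ A₃ A₄)) :
    ∃ m : MetricSpace ℝ, m.toUniformSpace.toTopologicalSpace = hybridTop A₁ A₂ A₃ A₄ :=
  have := @metrizableSpace_of_t3_secondCountable ℝ (hybridTop A₁ A₂ A₃ A₄)
    (t3Space_hybridTop hcov) hsc
  ⟨@metrizableSpaceMetric ℝ (hybridTop A₁ A₂ A₃ A₄) this, rfl⟩

theorem secondCountable_hybridTop_of_metricSpace (hcov : Is4Cover A₁ A₂ A₃ A₄)
    (h₂ : A₂.Countable)
    (hm : ∃ m : MetricSpace ℝ, m.toUniformSpace.toTopologicalSpace = hybridTop A₁ A₂ A₃ A₄) :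
    @SecondCountableTopology ℝ (hybridTop A₁ A₂ A₃ A₄) := by
  obtain ⟨m, hm⟩ := hm
  have : @SeparableSpace ℝ (hybridTop A₁ A₂ A₃ A₄) := @SeparableSpace.mk ℝ (hybridTop A₁ A₂ A₃ A₄)
    ⟨_, (countable_range _).union h₂, dense_hybridTop hcov⟩
  rw [← hm] at this ⊢
  exact @UniformSpace.secondCountable_of_separable ℝ m.toUniformSpace
    (by let := m; infer_instance) this

end Hybrid

/-- **Proposition 2.14.** If `A₂` is countable, then the following are equivalent:
(1) `H₄(𝒜)` is second-countable; (2) `H₄(𝒜)` is metrizable; (3) `A₃ ∪ A₄` is countable. -/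
theorem hybrid_secondCountable_metrizable_tfae
    (A₁ A₂ A₃ A₄ : Set ℝ) (hcov : Is4Cover A₁ A₂ A₃ A₄) (h2 : A₂.Countable) :
    List.TFAE
      [@SecondCountableTopology ℝ (hybridTop A₁ A₂ A₃ A₄),
       ∃ m : MetricSpace ℝ, m.toUniformSpace.toTopologicalSpace = hybridTop A₁ A₂ A₃ A₄,
       (A₃ ∪ A₄).Countable] := by
  tfae_have 1 → 2 := exists_metricSpace_of_secondCountable_hybridTop hcov
  tfae_have 2 → 1 := secondCountable_hybridTop_of_metricSpace hcov h2
  tfae_have 1 → 3 := countable_union_of_secondCountable_hybridTop hcov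
  tfae_have 3 → 1 := secondCountable_hybridTop_of_countable hcov h2
  tfae_finish
end

section
/- Let 𝒜 = {A₁, A₂, A₃, A₄} be a 4-cover of ℝ, let F be a subset of A₃ whose closure in 𝕊← is contained in A₂ ∪ A₃, and let q ∈ ℚ. Then the family 𝒰 = {[x, q) : x ∈ F, x < q} is an interior-preserving family of open sets in the hybrid space H₄(𝒜): each member of 𝒰 is open in H₄(𝒜) and the intersection of every nonempty subfamily of 𝒰 is open in H₄(𝒜). -/
open Set

/-!
A nonempty subfamily `{[x, q) : x ∈ T}` has intersection `[sup T, q)`, and `sup T` lies in the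
`𝕊←`-closure of `T ⊆ F`, hence in `A₂ ∪ A₃`. So it suffices that `[s, r)` is open in `H₄(𝒜)`
whenever `s ∈ A₂ ∪ A₃`: near `s` it contains a basic neighbourhood of `s` (`[s, r)` itself or
`{s}`), and `(s, r)` is open because `H₄(𝒜)` refines the Euclidean topology.
-/

open scoped Topology

theorem exists_Ioc_subset_of_isOpen_sorgenfreyLeft {U : Set ℝ}
    (hU : IsOpen[sorgenfreyLeftTop] U) {s : ℝ} (hs : s ∈ U) : ∃ a < s, Ioc a s ⊆ U := by
  induction hU generalizing s with
  | basic S hS =>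
    obtain ⟨a, b, rfl⟩ := hS
    exact ⟨a, hs.1, Ioc_subset_Ioc_right hs.2⟩
  | univ => exact ⟨s - 1, by linarith, subset_univ _⟩
  | inter S T _ _ ihS ihT =>
    obtain ⟨a, has, haS⟩ := ihS hs.1
    obtain ⟨b, hbs, hbT⟩ := ihT hs.2
    exact ⟨max a b, max_lt has hbs, subset_inter
      ((Ioc_subset_Ioc_left (le_max_left a b)).trans haS)
      ((Ioc_subset_Ioc_left (le_max_right a b)).trans hbT)⟩
  | sUnion 𝒮 _ ih =>
    obtain ⟨S, hS, hsS⟩ := hs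
    obtain ⟨a, has, haS⟩ := ih S hS hsS
    exact ⟨a, has, haS.trans (subset_sUnion_of_mem hS)⟩

theorem csSup_mem_closure_sorgenfreyLeft {T : Set ℝ} (hne : T.Nonempty) (hbdd : BddAbove T) :
    sSup T ∈ closure[sorgenfreyLeftTop] T := by
  refine (@mem_closure_iff ℝ sorgenfreyLeftTop _ _).2 fun O hO hsO => ?_
  obtain ⟨a, has, haO⟩ := exists_Ioc_subset_of_isOpen_sorgenfreyLeft hO hsO
  obtain ⟨x, hxT, hax⟩ := exists_lt_of_lt_csSup hne has
  exact ⟨x, haO ⟨hax, le_csSup hbdd hxT⟩, hxT⟩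

theorem biInter_Ico_eq_Ico_csSup {T : Set ℝ} (hne : T.Nonempty) (hbdd : BddAbove T) (b : ℝ) :
    ⋂ x ∈ T, Ico x b = Ico (sSup T) b := by
  ext y
  simp only [mem_iInter₂, mem_Ico, csSup_le_iff hbdd hne]
  exact ⟨fun h => ⟨fun x hx => (h x hx).1, (h _ hne.some_mem).2⟩,
    fun h x hx => ⟨h.1 x hx, h.2⟩⟩

section Hybrid

variable {A₁ A₂ A₃ A₄ : Set ℝ}

theorem isOpen_hybridTop_Ioo_of_mem_A₁ {x ε : ℝ} (hx : x ∈ A₁) (hε : 0 < ε) :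
    IsOpen[hybridTop A₁ A₂ A₃ A₄] (Ioo (x - ε) (x + ε)) :=
  TopologicalSpace.isOpen_generateFrom_of_mem (.inl (.inl (.inl ⟨x, hx, ε, hε, rfl⟩)))

theorem isOpen_hybridTop_singleton_of_mem_A₂ {x : ℝ} (hx : x ∈ A₂) :
    IsOpen[hybridTop A₁ A₂ A₃ A₄] {x} :=
  TopologicalSpace.isOpen_generateFrom_of_mem (.inl (.inl (.inr ⟨x, hx, rfl⟩)))

theorem isOpen_hybridTop_Ico_of_mem_A₃ {x : ℝ} (hx : x ∈ A₃) (b : ℝ) :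
    IsOpen[hybridTop A₁ A₂ A₃ A₄] (Ico x b) := by
  rcases lt_or_ge x b with hxb | hbx
  · have hb : Ico x b = Ico x (x + (b - x)) := by rw [add_sub_cancel]
    exact hb ▸ TopologicalSpace.isOpen_generateFrom_of_mem
      (.inl (.inr ⟨x, hx, b - x, sub_pos.2 hxb, rfl⟩))
  · rw [Ico_eq_empty hbx.not_gt]
    exact @isOpen_empty ℝ (hybridTop A₁ A₂ A₃ A₄)

theorem isOpen_hybridTop_Ioc_of_mem_A₄ {x ε : ℝ} (hx : x ∈ A₄) (hε : 0 < ε) :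
    IsOpen[hybridTop A₁ A₂ A₃ A₄] (Ioc (x - ε) x) :=
  TopologicalSpace.isOpen_generateFrom_of_mem (.inr ⟨x, hx, ε, hε, rfl⟩)

theorem isOpen_hybridTop_of_isOpen (hcov : Is4Cover A₁ A₂ A₃ A₄) {U : Set ℝ} (hU : IsOpen U) :
    IsOpen[hybridTop A₁ A₂ A₃ A₄] U := by
  refine (@isOpen_iff_forall_mem_open ℝ (hybridTop A₁ A₂ A₃ A₄) _).2 fun y hy => ?_
  obtain ⟨ε, hε, hball⟩ := Metric.isOpen_iff.1 hU y hy
  rw [Real.ball_eq_Ioo] at hball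
  have hyε : y - ε < y ∧ y < y + ε := ⟨by linarith, by linarith⟩
  have hy : y ∈ A₁ ∪ A₂ ∪ A₃ ∪ A₄ := hcov.1 ▸ mem_univ y
  rcases hy with ((h₁ | h₂) | h₃) | h₄
  · exact ⟨_, hball, isOpen_hybridTop_Ioo_of_mem_A₁ h₁ hε, hyε⟩
  · exact ⟨{y}, singleton_subset_iff.2 (hball hyε), isOpen_hybridTop_singleton_of_mem_A₂ h₂, rfl⟩
  · exact ⟨_, (Ico_subset_Ioo_left hyε.1).trans hball, isOpen_hybridTop_Ico_of_mem_A₃ h₃ _,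
      le_rfl, hyε.2⟩
  · exact ⟨_, (Ioc_subset_Ioo_right hyε.2).trans hball, isOpen_hybridTop_Ioc_of_mem_A₄ h₄ hε,
      hyε.1, le_rfl⟩

theorem isOpen_hybridTop_Ico (hcov : Is4Cover A₁ A₂ A₃ A₄) {s : ℝ} (hs : s ∈ A₂ ∪ A₃) (r : ℝ) :
    IsOpen[hybridTop A₁ A₂ A₃ A₄] (Ico s r) := by
  rcases hs with h₂ | h₃
  · rcases lt_or_ge s r with hsr | hrs
    · rw [← Ioo_insert_left hsr, insert_eq]
      exact @IsOpen.union ℝ _ _ (hybridTop A₁ A₂ A₃ A₄) (isOpen_hybridTop_singleton_of_mem_A₂ h₂)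
        (isOpen_hybridTop_of_isOpen hcov isOpen_Ioo)
    · rw [Ico_eq_empty hrs.not_gt]
      exact @isOpen_empty ℝ (hybridTop A₁ A₂ A₃ A₄)
  · exact isOpen_hybridTop_Ico_of_mem_A₃ h₃ r

end Hybrid

theorem hybrid_interiorPreserving_Ico_general
    (A₁ A₂ A₃ A₄ : Set ℝ) (hcov : Is4Cover A₁ A₂ A₃ A₄)
    (F : Set ℝ) (hcl : @closure ℝ sorgenfreyLeftTop F ⊆ A₂ ∪ A₃) (q : ℚ) :
    (∀ S ∈ {S : Set ℝ | ∃ x ∈ F, x < (q : ℝ) ∧ S = Set.Ico x (q : ℝ)},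
        @IsOpen ℝ (hybridTop A₁ A₂ A₃ A₄) S) ∧
    (∀ V ⊆ {S : Set ℝ | ∃ x ∈ F, x < (q : ℝ) ∧ S = Set.Ico x (q : ℝ)},
        V.Nonempty → @IsOpen ℝ (hybridTop A₁ A₂ A₃ A₄) (⋂₀ V)) := by
  have hopen : ∀ x ∈ closure[sorgenfreyLeftTop] F, IsOpen[hybridTop A₁ A₂ A₃ A₄] (Ico x q) :=
    fun x hx => isOpen_hybridTop_Ico hcov (hcl hx) q
  refine ⟨?_, ?_⟩
  · rintro S ⟨x, hxF, -, rfl⟩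
    exact hopen x (@subset_closure ℝ sorgenfreyLeftTop F _ hxF)
  · rintro V hV hVne
    set T : Set ℝ := {x | x ∈ F ∧ x < (q : ℝ) ∧ Ico x (q : ℝ) ∈ V}
    have hVT : V = (fun x => Ico x (q : ℝ)) '' T := by
      ext S
      refine ⟨fun hS => ?_, ?_⟩
      · obtain ⟨x, hxF, hxq, rfl⟩ := hV hS
        exact ⟨x, ⟨hxF, hxq, hS⟩, rfl⟩
      · rintro ⟨x, ⟨-, -, hxV⟩, rfl⟩
        exact hxV
    have hTne : T.Nonempty := (hVT ▸ hVne).of_image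
    have hTbdd : BddAbove T := ⟨q, fun x hx => hx.2.1.le⟩
    rw [hVT, sInter_image, biInter_Ico_eq_Ico_csSup hTne hTbdd]
    exact hopen _ (@closure_mono ℝ sorgenfreyLeftTop T F (fun x hx => hx.1) _
      (csSup_mem_closure_sorgenfreyLeft hTne hTbdd))

/-- The family `{[x, q) : x ∈ F, x < q}`, where `F ⊆ A₃` has `𝕊←`-closure inside
`A₂ ∪ A₃` and `q ∈ ℚ`, is an interior-preserving family of open sets in `H₄(𝒜)`. -/
theorem hybrid_interiorPreserving_Ico
    (A₁ A₂ A₃ A₄ : Set ℝ) (hcov : Is4Cover A₁ A₂ A₃ A₄)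
    (F : Set ℝ) (hF : F ⊆ A₃) (hcl : @closure ℝ sorgenfreyLeftTop F ⊆ A₂ ∪ A₃) (q : ℚ) :
    (∀ S ∈ {S : Set ℝ | ∃ x ∈ F, x < (q : ℝ) ∧ S = Set.Ico x (q : ℝ)},
        @IsOpen ℝ (hybridTop A₁ A₂ A₃ A₄) S) ∧
    (∀ V ⊆ {S : Set ℝ | ∃ x ∈ F, x < (q : ℝ) ∧ S = Set.Ico x (q : ℝ)},
        V.Nonempty → @IsOpen ℝ (hybridTop A₁ A₂ A₃ A₄) (⋂₀ V)) :=
  hybrid_interiorPreserving_Ico_general A₁ A₂ A₃ A₄ hcov F hcl q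
end
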